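/- arXiv:0807.1891 — 2 statements merged into one kernel-verified Lean document; each statement's English description precedes it below -/
import Mathlib

section
/- If an algorithm with speed s = 1+ε processes, during an interval [t, f], a total work of (1+ε)(f−t) on requests that all arrive within [t, f] and all have slack at most S, then any 1-speed algorithm cannot finish all these requests before time f + ε(f−t); hence some request with arrival time ≤ f and slack ≤ S finishes at time ≥ f + ε(f−t) in the 1-speed schedule, giving that algorithm delay factor at least ε(f−t)/S. -/
/-- If a (1+ε)-speed algorithm processes, during `[t, f]`, total work
`(1+ε)(f−t)` on requests that all arrive within `[t, f]` and have slack at most `S`,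
then in any 1-speed schedule (modeled by work conservation: all this work, which is
available only from time `t`, is done by the maximum finish time), some request with
arrival ≤ f and slack ≤ S finishes at time ≥ f + ε(f−t), so the 1-speed schedule has
delay factor at least ε(f−t)/S. -/
theorem stmt_0 (ε S t f : ℝ) {ι : Type*} (reqs : Finset ι)
    (a slack w fopt : ι → ℝ)
    (hε : 0 < ε) (hS : 0 < S) (htf : t < f)
    (hne : reqs.Nonempty)
    (harr : ∀ i ∈ reqs, t ≤ a i ∧ a i ≤ f)
    (hslack : ∀ i ∈ reqs, 0 < slack i ∧ slack i ≤ S)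
    (hw : ∀ i ∈ reqs, 0 ≤ w i)
    (hbusy : ∑ i ∈ reqs, w i = (1 + ε) * (f - t))
    -- work conservation for the 1-speed schedule: by any time `T` that upper bounds
    -- all of its finish times, it has processed all this work, at rate 1, after `t`
    (hcons : ∀ T : ℝ, (∀ i ∈ reqs, fopt i ≤ T) → ∑ i ∈ reqs, w i ≤ T - t) :
    ∃ i ∈ reqs, f + ε * (f - t) ≤ fopt i ∧
      ε * (f - t) / S ≤ (fopt i - a i) / slack i := by
  obtain ⟨i, hi, hmax⟩ := reqs.exists_max_image fopt hne
  have hc := hcons (fopt i) hmax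
  rw [hbusy] at hc
  have h1 : f + ε * (f - t) ≤ fopt i := by nlinarith
  refine ⟨i, hi, h1, ?_⟩
  obtain ⟨hs0, hsS⟩ := hslack i hi
  have haf := (harr i hi).2
  have h2 : ε * (f - t) ≤ fopt i - a i := by nlinarith
  calc ε * (f - t) / S ≤ (fopt i - a i) / S := by
        gcongr
    _ ≤ (fopt i - a i) / slack i := by
        gcongr
        nlinarith
end

section
/- In the immediate-dispatch multi-machine algorithm, for any time t, any class k, and any two machines x and y, the assigned volumes satisfy |U^x_{=k}(t) − U^y_{=k}(t)| ≤ 2^{k+1}, and consequently |U^x_{≤k}(t) − U^y_{≤k}(t)| ≤ 2^{k+2}. -/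
open Finset

noncomputable def assignedVol (N m : ℕ) (cls : Fin N → ℕ) (sz : Fin N → ℝ)
    (mach : Fin N → Fin m) (x : Fin m) (k t : ℕ) : ℝ :=
  ∑ i ∈ Finset.univ.filter (fun i : Fin N => (i : ℕ) < t ∧ mach i = x ∧ cls i = k), sz i

lemma vol_succ (N m : ℕ) (cls : Fin N → ℕ) (sz : Fin N → ℝ)
    (mach : Fin N → Fin m) (x : Fin m) (k t : ℕ) :
    assignedVol N m cls sz mach x k (t + 1) =
      assignedVol N m cls sz mach x k t +
        ∑ i ∈ Finset.univ.filter
            (fun i : Fin N => (i : ℕ) = t ∧ mach i = x ∧ cls i = k), sz i := by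
  unfold assignedVol
  rw [Finset.sum_filter, Finset.sum_filter, Finset.sum_filter, ← Finset.sum_add_distrib]
  refine Finset.sum_congr rfl fun i _ => ?_
  by_cases hP : mach i = x ∧ cls i = k
  · by_cases h1 : (i : ℕ) < t
    · rw [if_pos ⟨by omega, hP⟩, if_pos ⟨h1, hP⟩,
        if_neg (fun h => absurd h.1 (by omega)), add_zero]
    · by_cases h2 : (i : ℕ) = t
      · rw [if_pos ⟨by omega, hP⟩, if_neg (fun h => absurd h.1 h1), if_pos ⟨h2, hP⟩,
          zero_add]
      · rw [if_neg (fun h => absurd h.1 (by omega)), if_neg (fun h => absurd h.1 h1),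
          if_neg (fun h => absurd h.1 h2), add_zero]
  · rw [if_neg (fun h => hP h.2), if_neg (fun h => hP h.2), if_neg (fun h => hP h.2),
      add_zero]

lemma extra_eq (N m : ℕ) (cls : Fin N → ℕ) (sz : Fin N → ℝ)
    (mach : Fin N → Fin m) (x : Fin m) (k t : ℕ) (h : t < N) :
    ∑ i ∈ Finset.univ.filter
        (fun i : Fin N => (i : ℕ) = t ∧ mach i = x ∧ cls i = k), sz i =
      if mach ⟨t, h⟩ = x ∧ cls ⟨t, h⟩ = k then sz ⟨t, h⟩ else 0 := by
  have hset : Finset.univ.filter (fun i : Fin N => (i : ℕ) = t ∧ mach i = x ∧ cls i = k)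
      = if mach ⟨t, h⟩ = x ∧ cls ⟨t, h⟩ = k then {⟨t, h⟩} else ∅ := by
    ext i
    simp only [Finset.mem_filter, Finset.mem_univ, true_and]
    constructor
    · rintro ⟨h1, h2, h3⟩
      have : i = ⟨t, h⟩ := Fin.ext h1
      subst this
      simp [h2, h3]
    · intro hi
      split_ifs at hi with hc
      · simp at hi; subst hi; exact ⟨rfl, hc⟩
      · simp at hi
  rw [hset]
  split_ifs <;> simp

lemma extra_eq' (N m : ℕ) (cls : Fin N → ℕ) (sz : Fin N → ℝ)
    (mach : Fin N → Fin m) (x : Fin m) (k t : ℕ) (h : ¬ t < N) :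
    ∑ i ∈ Finset.univ.filter
        (fun i : Fin N => (i : ℕ) = t ∧ mach i = x ∧ cls i = k), sz i = 0 := by
  rw [Finset.filter_false_of_mem, Finset.sum_empty]
  rintro i _ ⟨h1, -, -⟩
  exact h (h1 ▸ i.isLt)

/-- In the immediate-dispatch algorithm, each request of class `k`
has size at most `2^(k+1)` and is assigned to a machine minimizing the current
class-`k` assigned volume.  Then for any time `t`, class `k`, and machines `x`,
`y`: `|U^x_{=k}(t) − U^y_{=k}(t)| ≤ 2^(k+1)`, and consequently
`|U^x_{≤k}(t) − U^y_{≤k}(t)| ≤ 2^(k+2)`. -/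
theorem stmt_2 (N m : ℕ) (hm : 0 < m) (cls : Fin N → ℕ) (sz : Fin N → ℝ)
    (mach : Fin N → Fin m)
    (hsz : ∀ i, 0 ≤ sz i ∧ sz i ≤ 2 ^ (cls i + 1))
    (hgreedy : ∀ (i : Fin N) (y : Fin m),
      assignedVol N m cls sz mach (mach i) (cls i) i ≤
        assignedVol N m cls sz mach y (cls i) i) :
    ∀ (t k : ℕ) (x y : Fin m),
      |assignedVol N m cls sz mach x k t - assignedVol N m cls sz mach y k t|
          ≤ 2 ^ (k + 1) ∧
      |(∑ j ∈ Finset.range (k + 1), assignedVol N m cls sz mach x j t) -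
          ∑ j ∈ Finset.range (k + 1), assignedVol N m cls sz mach y j t|
          ≤ 2 ^ (k + 2) := by
  have key : ∀ (t k : ℕ) (x y : Fin m),
      |assignedVol N m cls sz mach x k t - assignedVol N m cls sz mach y k t|
        ≤ 2 ^ (k + 1) := by
    intro t
    induction t with
    | zero =>
      intro k x y
      have h0 : ∀ z : Fin m, assignedVol N m cls sz mach z k 0 = 0 := by
        intro z; simp [assignedVol]
      rw [h0, h0, sub_zero, abs_zero]
      positivity
    | succ t ih =>
      intro k x y
      by_cases hN : t < N
      · rw [vol_succ, vol_succ, extra_eq _ _ _ _ _ _ _ _ hN, extra_eq _ _ _ _ _ _ _ _ hN]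
        set i : Fin N := ⟨t, hN⟩ with hi
        by_cases hk : cls i = k
        · subst hk
          obtain ⟨hs0, hs1⟩ := hsz i
          have hIH := ih (cls i) x y
          rw [abs_le] at hIH
          have hgx : assignedVol N m cls sz mach (mach i) (cls i) t ≤
              assignedVol N m cls sz mach x (cls i) t := hgreedy i x
          have hgy : assignedVol N m cls sz mach (mach i) (cls i) t ≤
              assignedVol N m cls sz mach y (cls i) t := hgreedy i y
          by_cases hx : mach i = x <;> by_cases hy : mach i = y
          · rw [if_pos ⟨hx, rfl⟩, if_pos ⟨hy, rfl⟩]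
            have heq : assignedVol N m cls sz mach x (cls i) t + sz i -
                (assignedVol N m cls sz mach y (cls i) t + sz i) =
                assignedVol N m cls sz mach x (cls i) t -
                assignedVol N m cls sz mach y (cls i) t := by ring
            rw [heq, abs_le]; exact hIH
          · rw [if_pos ⟨hx, rfl⟩, if_neg (fun h => hy h.1), add_zero]
            rw [hx] at hgy
            rw [abs_le]
            constructor <;> linarith [hIH.1, hIH.2]
          · rw [if_neg (fun h => hx h.1), if_pos ⟨hy, rfl⟩, add_zero]
            rw [hy] at hgx
            rw [abs_le]
            constructor <;> linarith [hIH.1, hIH.2]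
          · rw [if_neg (fun h => hx h.1), if_neg (fun h => hy h.1), add_zero, add_zero,
              abs_le]
            exact hIH
        · rw [if_neg (fun h => hk h.2), if_neg (fun h => hk h.2), add_zero, add_zero]
          exact ih k x y
      · rw [vol_succ, vol_succ, extra_eq' _ _ _ _ _ _ _ _ hN, extra_eq' _ _ _ _ _ _ _ _ hN,
          add_zero, add_zero]
        exact ih k x y
  intro t k x y
  refine ⟨key t k x y, ?_⟩
  have geom : ∀ n : ℕ, ∑ j ∈ Finset.range n, (2 : ℝ) ^ (j + 1) ≤ 2 ^ (n + 1) := by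
    intro n
    induction n with
    | zero => norm_num
    | succ n ihn =>
      rw [Finset.sum_range_succ]
      have h2 : (2 : ℝ) ^ (n + 1 + 1) = 2 ^ (n + 1) + 2 ^ (n + 1) := by ring
      rw [h2]
      gcongr
  calc |(∑ j ∈ Finset.range (k + 1), assignedVol N m cls sz mach x j t) -
          ∑ j ∈ Finset.range (k + 1), assignedVol N m cls sz mach y j t|
      = |∑ j ∈ Finset.range (k + 1),
          (assignedVol N m cls sz mach x j t - assignedVol N m cls sz mach y j t)| := by
        rw [Finset.sum_sub_distrib]
    _ ≤ ∑ j ∈ Finset.range (k + 1),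
          |assignedVol N m cls sz mach x j t - assignedVol N m cls sz mach y j t| :=
        Finset.abs_sum_le_sum_abs _ _
    _ ≤ ∑ j ∈ Finset.range (k + 1), (2 : ℝ) ^ (j + 1) :=
        Finset.sum_le_sum fun j _ => key t j x y
    _ ≤ 2 ^ (k + 1 + 1) := geom (k + 1)
    _ = 2 ^ (k + 2) := rfl
end
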